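/- arXiv:2002.07624 — 2 statements merged into one kernel-verified Lean document; each statement's English description precedes it below -/
import Mathlib

section
/- For orthonormal matrices H1, H2 in O(p,r), it holds that (1/√2)·‖H1 H1ᵀ − H2 H2ᵀ‖_F ≤ inf over O in the orthogonal group O(r) of ‖H1 − H2·O‖_F ≤ ‖H1 H1ᵀ − H2 H2ᵀ‖_F. -/
/-!
Put `M = H₂ᵀ H₁`. Orthonormality of the columns gives `‖H₁ - H₂ O‖² = 2r - 2 tr (Oᵀ M)` and
`‖H₁ H₁ᵀ - H₂ H₂ᵀ‖² = 2r - 2 tr (Mᵀ M)`. The lower bound is then `‖M - O‖² ≥ 0`. For the upper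
bound, `M` is a contraction (`Mᵀ M ≤ 1`), and its polar decomposition `M = O √(Mᵀ M)` gives
`tr (Oᵀ M) = tr √(Mᵀ M) ≥ tr (Mᵀ M)`. The polar factor `O` is obtained by extending the isometry
`√(Mᵀ M) x ↦ M x` from the range of `√(Mᵀ M)` to the whole space.
-/

open Matrix

/-- Frobenius norm of a real matrix. -/
noncomputable def frob {m n : ℕ} (A : Matrix (Fin m) (Fin n) ℝ) : ℝ :=
  Real.sqrt (∑ i, ∑ j, (A i j) ^ 2)

open scoped MatrixOrder ComplexOrder

theorem LinearIsometry.exists_comp_eq_of_norm_map_eq {𝕜 E V : Type*} [RCLike 𝕜] [AddCommGroup E]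
    [Module 𝕜 E] [NormedAddCommGroup V] [InnerProductSpace 𝕜 V] [FiniteDimensional 𝕜 V]
    (A B : E →ₗ[𝕜] V) (h : ∀ x, ‖A x‖ = ‖B x‖) :
    ∃ U : V →ₗᵢ[𝕜] V, ∀ x, U (A x) = B x := by
  have hker : LinearMap.ker A ≤ LinearMap.ker B := fun x hx => by
    rw [LinearMap.mem_ker, ← norm_eq_zero, ← h, norm_eq_zero, ← LinearMap.mem_ker]
    exact hx
  let L : LinearMap.range A →ₗ[𝕜] V :=
    (LinearMap.ker A).liftQ B hker ∘ₗ A.quotKerEquivRange.symm.toLinearMap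
  have hL : ∀ x, L ⟨A x, LinearMap.mem_range_self A x⟩ = B x := fun x => by
    simp [L, LinearMap.quotKerEquivRange_symm_apply_image]
  let L' : LinearMap.range A →ₗᵢ[𝕜] V :=
    { L with
      norm_map' := by
        rintro ⟨_, x, rfl⟩
        change ‖L ⟨A x, _⟩‖ = ‖A x‖
        rw [hL, h] }
  exact ⟨L'.extend, fun x => (L'.extend_apply ⟨A x, LinearMap.mem_range_self A x⟩).trans (hL x)⟩

namespace Matrix

variable {𝕜 n : Type*} [RCLike 𝕜] [Fintype n] [DecidableEq n]

theorem norm_toEuclideanLin_apply_eq_of_conjTranspose_mul_self_eq {m : Type*} [Fintype m]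
    {A B : Matrix m n 𝕜} (h : Aᴴ * A = Bᴴ * B) (x : EuclideanSpace 𝕜 n) :
    ‖toEuclideanLin A x‖ = ‖toEuclideanLin B x‖ := by
  classical
  have hinner : ∀ C : Matrix m n 𝕜, inner 𝕜 (toEuclideanLin C x) (toEuclideanLin C x) =
      inner 𝕜 x (toEuclideanLin (Cᴴ * C) x) := fun C => by
    rw [← LinearMap.adjoint_inner_right, ← toEuclideanLin_conjTranspose_eq_adjoint,
      toLpLin_mul]
    rfl
  rw [norm_eq_sqrt_re_inner (𝕜 := 𝕜), norm_eq_sqrt_re_inner (𝕜 := 𝕜), hinner, hinner, h]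

theorem exists_mem_unitaryGroup_mul_eq_of_conjTranspose_mul_self_eq {A B : Matrix n n 𝕜}
    (h : Aᴴ * A = Bᴴ * B) : ∃ U ∈ unitaryGroup n 𝕜, U * A = B := by
  obtain ⟨U, hU⟩ := LinearIsometry.exists_comp_eq_of_norm_map_eq _ _
    (norm_toEuclideanLin_apply_eq_of_conjTranspose_mul_self_eq h)
  let b := EuclideanSpace.basisFun n 𝕜
  refine ⟨LinearMap.toMatrix b.toBasis b.toBasis U.toLinearMap,
    (U.toLinearIsometryEquiv rfl).toMatrix_mem_unitaryGroup b b, ?_⟩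
  apply toEuclideanLin.injective
  rw [toEuclideanLin_eq_toLin_orthonormal, toLin_mul _ b.toBasis, toLin_toMatrix]
  exact LinearMap.ext hU

theorem exists_mem_unitaryGroup_mul_sqrt (A : Matrix n n 𝕜) :
    ∃ U ∈ unitaryGroup n 𝕜, U * CFC.sqrt (Aᴴ * A) = A := by
  refine exists_mem_unitaryGroup_mul_eq_of_conjTranspose_mul_self_eq ?_
  rw [← star_eq_conjTranspose, (CFC.sqrt_nonneg _).isSelfAdjoint.star_eq,
    CFC.sqrt_mul_sqrt_self _ (posSemidef_conjTranspose_mul_self A).nonneg]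

end Matrix

theorem CFC.le_sqrt_of_le_one {A : Type*} [PartialOrder A] [Ring A] [StarRing A]
    [TopologicalSpace A] [StarOrderedRing A] [Algebra ℝ A]
    [ContinuousFunctionalCalculus ℝ A IsSelfAdjoint] [NonnegSpectrumClass ℝ A]
    [IsSemitopologicalRing A] [T2Space A] {a : A} (ha₀ : 0 ≤ a) (ha₁ : a ≤ 1) :
    a ≤ CFC.sqrt a := by
  rw [CFC.sqrt_eq_real_sqrt a, cfcₙ_eq_cfc]
  conv_lhs => rw [← cfc_id' ℝ a]
  refine cfc_mono fun x hx => ?_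
  have hx₀ : 0 ≤ x := spectrum_nonneg_of_nonneg ha₀ hx
  have hx₁ : x ≤ 1 := (CFC.le_one_iff a).mp ha₁ x hx
  exact Real.le_sqrt_of_sq_le (by nlinarith)

namespace Matrix

variable {m n R : Type*} [Fintype m] [Fintype n]

theorem trace_transpose_sub_mul_sub [CommRing R] (A B : Matrix m n R) :
    trace ((A - B)ᵀ * (A - B)) = trace (Aᵀ * A) + trace (Bᵀ * B) - 2 * trace (Bᵀ * A) := by
  have hsymm : trace (Aᵀ * B) = trace (Bᵀ * A) := by
    rw [← trace_transpose, transpose_mul, transpose_transpose]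
  simp only [transpose_sub, Matrix.sub_mul, Matrix.mul_sub, trace_sub, hsymm]
  ring

theorem trace_transpose_mul_self_nonneg (A : Matrix m n ℝ) : 0 ≤ trace (Aᵀ * A) := by
  simpa using (posSemidef_conjTranspose_mul_self A).trace_nonneg

variable [DecidableEq n]

theorem posSemidef_one_sub_mul_transpose [DecidableEq m] {H : Matrix m n ℝ} (hH : Hᵀ * H = 1) :
    (1 - H * Hᵀ).PosSemidef := by
  have hidem : (1 - H * Hᵀ)ᵀ * (1 - H * Hᵀ) = 1 - H * Hᵀ := by
    have : H * Hᵀ * (H * Hᵀ) = H * Hᵀ := by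
      rw [Matrix.mul_assoc, ← Matrix.mul_assoc Hᵀ, hH, Matrix.one_mul]
    simp only [transpose_sub, transpose_one, transpose_mul, transpose_transpose, Matrix.sub_mul,
      Matrix.mul_sub, Matrix.one_mul, Matrix.mul_one, this]
    abel
  have := posSemidef_conjTranspose_mul_self (1 - H * Hᵀ)
  rwa [conjTranspose_eq_transpose_of_trivial, hidem] at this

theorem transpose_mul_transpose_mul_le_one [DecidableEq m] {H₁ H₂ : Matrix m n ℝ}
    (h₁ : H₁ᵀ * H₁ = 1) (h₂ : H₂ᵀ * H₂ = 1) :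
    (H₂ᵀ * H₁)ᵀ * (H₂ᵀ * H₁) ≤ 1 := by
  have h := (posSemidef_one_sub_mul_transpose h₂).conjTranspose_mul_mul_same H₁
  rw [conjTranspose_eq_transpose_of_trivial, Matrix.mul_sub, Matrix.sub_mul, Matrix.mul_one,
    h₁] at h
  rw [le_iff, transpose_mul, transpose_transpose]
  simpa only [Matrix.mul_assoc] using h

variable {H₁ H₂ : Matrix m n ℝ}

theorem trace_transpose_sub_mul_sub_of_orthonormal (h₁ : H₁ᵀ * H₁ = 1) (h₂ : H₂ᵀ * H₂ = 1)
    {O : Matrix n n ℝ} (hO : Oᵀ * O = 1) :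
    trace ((H₁ - H₂ * O)ᵀ * (H₁ - H₂ * O)) =
      2 * Fintype.card n - 2 * trace (Oᵀ * (H₂ᵀ * H₁)) := by
  have hH₂O : (H₂ * O)ᵀ * (H₂ * O) = 1 := by
    rw [transpose_mul, Matrix.mul_assoc, ← Matrix.mul_assoc H₂ᵀ, h₂, Matrix.one_mul, hO]
  rw [trace_transpose_sub_mul_sub, h₁, hH₂O, transpose_mul, Matrix.mul_assoc, trace_one]
  ring

theorem trace_transpose_mul_self_mul_transpose {H : Matrix m n ℝ} (hH : Hᵀ * H = 1) :
    trace ((H * Hᵀ)ᵀ * (H * Hᵀ)) = Fintype.card n := by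
  rw [transpose_mul, transpose_transpose, Matrix.mul_assoc, ← Matrix.mul_assoc Hᵀ, hH,
    Matrix.one_mul, trace_mul_comm, hH, trace_one]

theorem trace_transpose_mul_self_sub_mul_transpose (h₁ : H₁ᵀ * H₁ = 1) (h₂ : H₂ᵀ * H₂ = 1) :
    trace ((H₁ * H₁ᵀ - H₂ * H₂ᵀ)ᵀ * (H₁ * H₁ᵀ - H₂ * H₂ᵀ)) =
      2 * Fintype.card n - 2 * trace ((H₂ᵀ * H₁)ᵀ * (H₂ᵀ * H₁)) := by
  have hcross : trace ((H₂ * H₂ᵀ)ᵀ * (H₁ * H₁ᵀ)) = trace ((H₂ᵀ * H₁)ᵀ * (H₂ᵀ * H₁)) :=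
    calc trace ((H₂ * H₂ᵀ)ᵀ * (H₁ * H₁ᵀ)) = trace (H₂ * (H₂ᵀ * H₁ * H₁ᵀ)) := by
          simp only [transpose_mul, transpose_transpose, Matrix.mul_assoc]
      _ = trace (H₂ᵀ * H₁ * (H₂ᵀ * H₁)ᵀ) := by
          rw [trace_mul_comm, transpose_mul, transpose_transpose, Matrix.mul_assoc]
      _ = trace ((H₂ᵀ * H₁)ᵀ * (H₂ᵀ * H₁)) := trace_mul_comm _ _
  rw [trace_transpose_sub_mul_sub, trace_transpose_mul_self_mul_transpose h₁,
    trace_transpose_mul_self_mul_transpose h₂, hcross]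
  ring

theorem two_mul_trace_transpose_mul_le (M : Matrix n n ℝ) {O : Matrix n n ℝ} (hO : Oᵀ * O = 1) :
    2 * trace (Oᵀ * M) ≤ trace (Mᵀ * M) + Fintype.card n := by
  have := trace_transpose_mul_self_nonneg (M - O)
  rw [trace_transpose_sub_mul_sub, hO, trace_one] at this
  linarith

theorem exists_orthogonal_trace_transpose_mul_self_le {M : Matrix n n ℝ} (hM : Mᵀ * M ≤ 1) :
    ∃ O : Matrix n n ℝ, Oᵀ * O = 1 ∧ trace (Mᵀ * M) ≤ trace (Oᵀ * M) := by
  obtain ⟨O, hO, hOM⟩ := exists_mem_unitaryGroup_mul_sqrt M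
  rw [mem_unitaryGroup_iff', star_eq_conjTranspose, conjTranspose_eq_transpose_of_trivial] at hO
  rw [conjTranspose_eq_transpose_of_trivial] at hOM
  refine ⟨O, hO, ?_⟩
  have hle := CFC.le_sqrt_of_le_one (posSemidef_conjTranspose_mul_self M).nonneg hM
  rw [conjTranspose_eq_transpose_of_trivial] at hle
  have htrace : trace (Oᵀ * M) = trace (CFC.sqrt (Mᵀ * M)) := by
    conv_lhs => rw [← hOM, ← Matrix.mul_assoc, hO, Matrix.one_mul]
  have := (le_iff.mp hle).trace_nonneg
  rw [trace_sub] at this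
  linarith

end Matrix

theorem frob_sq {m n : ℕ} (A : Matrix (Fin m) (Fin n) ℝ) : frob A ^ 2 = trace (Aᵀ * A) := by
  rw [frob, Real.sq_sqrt (by positivity), Finset.sum_comm]
  simp [trace, mul_apply, sq]

theorem frob_nonneg {m n : ℕ} (A : Matrix (Fin m) (Fin n) ℝ) : 0 ≤ frob A := Real.sqrt_nonneg _

/-- For `H1, H2 ∈ O(p,r)`,
`(1/√2)·‖H1H1ᵀ − H2H2ᵀ‖_F ≤ inf_{O ∈ O(r)} ‖H1 − H2 O‖_F ≤ ‖H1H1ᵀ − H2H2ᵀ‖_F`. -/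
theorem projection_dist_procrustes {p r : ℕ} (H1 H2 : Matrix (Fin p) (Fin r) ℝ)
    (h1 : H1ᵀ * H1 = 1) (h2 : H2ᵀ * H2 = 1) :
    (1 / Real.sqrt 2) * frob (H1 * H1ᵀ - H2 * H2ᵀ) ≤
      sInf {x : ℝ | ∃ O : Matrix (Fin r) (Fin r) ℝ, Oᵀ * O = 1 ∧ x = frob (H1 - H2 * O)} ∧
    sInf {x : ℝ | ∃ O : Matrix (Fin r) (Fin r) ℝ, Oᵀ * O = 1 ∧ x = frob (H1 - H2 * O)} ≤
      frob (H1 * H1ᵀ - H2 * H2ᵀ) := by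
  set M := H2ᵀ * H1
  have hproj : frob (H1 * H1ᵀ - H2 * H2ᵀ) ^ 2 = 2 * r - 2 * trace (Mᵀ * M) := by
    rw [frob_sq, trace_transpose_mul_self_sub_mul_transpose h1 h2, Fintype.card_fin]
  have hdist : ∀ O : Matrix (Fin r) (Fin r) ℝ, Oᵀ * O = 1 →
      frob (H1 - H2 * O) ^ 2 = 2 * r - 2 * trace (Oᵀ * M) := fun O hO => by
    rw [frob_sq, trace_transpose_sub_mul_sub_of_orthonormal h1 h2 hO, Fintype.card_fin]
  refine ⟨le_csInf ⟨_, 1, by simp, rfl⟩ ?_, ?_⟩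
  · rintro _ ⟨O, hO, rfl⟩
    have hO_le := two_mul_trace_transpose_mul_le M hO
    rw [Fintype.card_fin] at hO_le
    rw [one_div, inv_mul_le_iff₀ (by positivity), ← pow_le_pow_iff_left₀ (frob_nonneg _)
      (mul_nonneg (Real.sqrt_nonneg 2) (frob_nonneg _)) two_ne_zero, mul_pow,
      Real.sq_sqrt zero_le_two, hproj, hdist O hO]
    linarith
  · obtain ⟨O, hO, hO_ge⟩ :=
      exists_orthogonal_trace_transpose_mul_self_le (transpose_mul_transpose_mul_le_one h1 h2)
    refine le_trans (csInf_le ?_ ⟨O, hO, rfl⟩) ?_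
    · exact ⟨0, by rintro _ ⟨O, -, rfl⟩; exact frob_nonneg _⟩
    · rw [← pow_le_pow_iff_left₀ (frob_nonneg _) (frob_nonneg _) two_ne_zero, hproj, hdist O hO]
      linarith
end

section
/- Let U ∈ O(p1, r) and Γ = diag(λ1, ..., λr) with λ1 ≥ ... ≥ λr > 0. Then for any W ∈ O(p1, r), (λr²/2)·‖UUᵀ − WWᵀ‖_F² ≤ ⟨U Γ² Uᵀ, UUᵀ − WWᵀ⟩ ≤ (λ1²/2)·‖UUᵀ − WWᵀ‖_F², where ⟨A, B⟩ = tr(Aᵀ B). -/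
/-! With `M = Uᵀ (UUᵀ - WWᵀ) U = ((1 - WWᵀ) U)ᵀ ((1 - WWᵀ) U)`, the inner product
`⟨UΓ²Uᵀ, UUᵀ - WWᵀ⟩ = tr (Γ² M)` is the weighted sum `∑ λᵢ² Mᵢᵢ` of nonnegative diagonal entries,
while `‖UUᵀ - WWᵀ‖_F² = 2 tr M` because both projections have rank `r`. Bounding each `λᵢ²`
between `λ_r²` and `λ₁²` gives the two inequalities. -/

open Matrix

lemma frob_sq_eq_trace {p q : ℕ} (A : Matrix (Fin p) (Fin q) ℝ) :
    frob A ^ 2 = trace (Aᵀ * A) := by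
  rw [frob, Real.sq_sqrt (by positivity), Finset.sum_comm]
  simp only [trace, diag, mul_apply, transpose_apply, sq]

namespace Matrix

variable {m n R : Type*} [Fintype m] [Fintype n]

lemma diag_transpose_mul_mul_nonneg {E : Matrix m m ℝ} (hE : IsIdempotentElem E) (hEt : Eᵀ = E)
    (A : Matrix m n ℝ) (i : n) : 0 ≤ (Aᵀ * E * A) i i := by
  have hgram : Aᵀ * E * A = (E * A)ᴴ * (E * A) := by
    rw [conjTranspose_eq_transpose_of_trivial, transpose_mul, hEt, ← Matrix.mul_assoc (Aᵀ * E),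
      Matrix.mul_assoc Aᵀ E E, hE.eq]
  rw [hgram]
  exact (posSemidef_conjTranspose_mul_self _).diag_nonneg

variable [DecidableEq n]

section CommRing

variable [CommRing R]

lemma isIdempotentElem_mul_transpose {U : Matrix m n R} (hU : Uᵀ * U = 1) :
    IsIdempotentElem (U * Uᵀ) := by
  rw [IsIdempotentElem, Matrix.mul_assoc, ← Matrix.mul_assoc Uᵀ, hU, Matrix.one_mul]

lemma trace_mul_transpose_of_transpose_mul_self_eq_one {U : Matrix m n R} (hU : Uᵀ * U = 1) :
    trace (U * Uᵀ) = Fintype.card n := by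
  rw [trace_mul_comm, hU, trace_one]

lemma trace_conj_diagonal_transpose_mul (U : Matrix m n R) (g : n → R) (D : Matrix m m R) :
    trace ((U * diagonal g * Uᵀ)ᵀ * D) = ∑ i, g i * (Uᵀ * D * U) i i := by
  rw [transpose_mul, transpose_mul, transpose_transpose, diagonal_transpose, Matrix.mul_assoc,
    trace_mul_comm]
  simp only [trace, diag, Matrix.mul_assoc, diagonal_mul]

lemma transpose_mul_mul_transpose_sub_mul [DecidableEq m] {U : Matrix m n R} (hU : Uᵀ * U = 1)
    (Q : Matrix m m R) : Uᵀ * (U * Uᵀ - Q) * U = Uᵀ * (1 - Q) * U := by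
  simp only [Matrix.mul_sub, Matrix.sub_mul, ← Matrix.mul_assoc, hU, Matrix.one_mul,
    Matrix.mul_one]

/-- Both sides equal `2 (card n - tr (UUᵀ WWᵀ))`. -/
lemma trace_transpose_mul_self_sub_projections {U W : Matrix m n R}
    (hU : Uᵀ * U = 1) (hW : Wᵀ * W = 1) :
    trace ((U * Uᵀ - W * Wᵀ)ᵀ * (U * Uᵀ - W * Wᵀ)) = 2 * trace (Uᵀ * (U * Uᵀ - W * Wᵀ) * U) := by
  have hP := (isIdempotentElem_mul_transpose hU).eq
  have hQ := (isIdempotentElem_mul_transpose hW).eq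
  have hPQ := trace_mul_comm (U * Uᵀ) (W * Wᵀ)
  have hUP : trace (Uᵀ * (U * Uᵀ - W * Wᵀ) * U) = trace (U * Uᵀ * (U * Uᵀ - W * Wᵀ)) := by
    rw [trace_mul_comm, ← Matrix.mul_assoc]
  rw [hUP, transpose_sub, transpose_mul, transpose_mul, transpose_transpose, transpose_transpose]
  simp only [Matrix.sub_mul, Matrix.mul_sub, trace_sub, hP, hQ,
    trace_mul_transpose_of_transpose_mul_self_eq_one hU,
    trace_mul_transpose_of_transpose_mul_self_eq_one hW, hPQ]
  ring

end CommRing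

lemma diag_transpose_mul_sub_projections_nonneg [DecidableEq m] {U W : Matrix m n ℝ}
    (hU : Uᵀ * U = 1) (hW : Wᵀ * W = 1) (i : n) :
    0 ≤ (Uᵀ * (U * Uᵀ - W * Wᵀ) * U) i i := by
  rw [transpose_mul_mul_transpose_sub_mul hU]
  refine diag_transpose_mul_mul_nonneg (isIdempotentElem_mul_transpose hW).one_sub ?_ U i
  rw [transpose_sub, transpose_one, transpose_mul, transpose_transpose]

end Matrix

/-- For `U, W ∈ O(p1,r)` and `Γ = diag(λ1,...,λr)` with `λ1 ≥ ... ≥ λr > 0`,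
`(λr²/2)‖UUᵀ−WWᵀ‖_F² ≤ ⟨UΓ²Uᵀ, UUᵀ−WWᵀ⟩ ≤ (λ1²/2)‖UUᵀ−WWᵀ‖_F²`. -/
theorem quadratic_form_bounds {p1 r : ℕ} (hr : 0 < r)
    (U W : Matrix (Fin p1) (Fin r) ℝ)
    (hU : Uᵀ * U = 1) (hW : Wᵀ * W = 1)
    (l : Fin r → ℝ) (hpos : ∀ i, 0 < l i)
    (hmono : ∀ i j : Fin r, i ≤ j → l j ≤ l i) :
    (l ⟨r - 1, by omega⟩) ^ 2 / 2 * frob (U * Uᵀ - W * Wᵀ) ^ 2 ≤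
      trace ((U * diagonal (fun i => (l i) ^ 2) * Uᵀ)ᵀ * (U * Uᵀ - W * Wᵀ)) ∧
    trace ((U * diagonal (fun i => (l i) ^ 2) * Uᵀ)ᵀ * (U * Uᵀ - W * Wᵀ)) ≤
      (l ⟨0, hr⟩) ^ 2 / 2 * frob (U * Uᵀ - W * Wᵀ) ^ 2 := by
  have hlast : ∀ i, l ⟨r - 1, by omega⟩ ^ 2 ≤ l i ^ 2 := fun i =>
    pow_le_pow_left₀ (hpos _).le (hmono _ _ (Fin.mk_le_mk.mpr (by omega))) 2
  have hfirst : ∀ i, l i ^ 2 ≤ l ⟨0, hr⟩ ^ 2 := fun i =>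
    pow_le_pow_left₀ (hpos i).le (hmono _ _ (Fin.le_def.mpr i.val.zero_le)) 2
  rw [trace_conj_diagonal_transpose_mul, frob_sq_eq_trace,
    trace_transpose_mul_self_sub_projections hU hW]
  set M := Uᵀ * (U * Uᵀ - W * Wᵀ) * U
  have hM : ∀ i, 0 ≤ M i i := diag_transpose_mul_sub_projections_nonneg hU hW
  constructor
  · calc _ = ∑ i, l ⟨r - 1, by omega⟩ ^ 2 * M i i := by
          rw [← Finset.mul_sum]; simp only [trace, diag]; ring
      _ ≤ _ := Finset.sum_le_sum fun i _ => mul_le_mul_of_nonneg_right (hlast i) (hM i)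
  · calc _ ≤ ∑ i, l ⟨0, hr⟩ ^ 2 * M i i :=
          Finset.sum_le_sum fun i _ => mul_le_mul_of_nonneg_right (hfirst i) (hM i)
      _ = _ := by rw [← Finset.mul_sum]; simp only [trace, diag]; ring
end
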